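/- Let f ∈ ℚ((x^{-1})) be a Laurent series and let a, b ∈ ℚ[x] be nonzero polynomials. Then f is well approximable if and only if the Laurent series g = (a/b)·f is well approximable (and consequently f is badly approximable if and only if g is badly approximable). -/

import Mathlib

open Polynomial

noncomputable section

/-- The coefficient of `x^{-n}` in the generalized Thue–Morse series `f_d`:
`(-1)^s` if every base-`d` digit of `n` is `0` or `1` and exactly `s` digits equal `1`,
and `0` otherwise. -/
def tmCoeff (d n : ℕ) : ℚ :=
  if (Nat.digits d n).all (· ≤ 1) then (-1 : ℚ) ^ (Nat.digits d n).sum else 0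

/-- We represent the field `ℚ((x⁻¹))` of formal Laurent series in `x⁻¹` as
`LaurentSeries ℚ` in the variable `y = x⁻¹`; the coefficient of `y^n` is the
coefficient of `x^{-n}`.  `fd d` is the generalized Thue–Morse function `f_d`. -/
def fd (d : ℕ) : LaurentSeries ℚ :=
  HahnSeries.ofPowerSeries ℤ ℚ (PowerSeries.mk fun n => tmCoeff d n)

/-- The element `x` of `ℚ((x⁻¹))`, i.e. `y⁻¹`. -/
def xL : LaurentSeries ℚ := HahnSeries.single (-1 : ℤ) 1

/-- Substitution `x ↦ x^d` on `ℚ((x⁻¹))` (i.e. `y ↦ y^d`). -/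
def substPow (d : ℕ) (u : LaurentSeries ℚ) : LaurentSeries ℚ :=
  if h : 0 < d then
    HahnSeries.embDomain
      (OrderEmbedding.ofStrictMono (fun n : ℤ => (d : ℤ) * n)
        (fun a b hab => mul_lt_mul_of_pos_left hab (by exact_mod_cast h))) u
  else 0

/-- The degree `‖u‖` of a Laurent series `u ∈ ℚ((x⁻¹))`: the largest exponent of `x`
with nonzero coefficient, i.e. minus the order in `y = x⁻¹`. -/
def ldeg (u : LaurentSeries ℚ) : ℤ := -u.order

/-- The embedding of `ℚ[x]` into `ℚ((x⁻¹))`, sending the polynomial variable to `x`. -/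
def polyToLS (p : ℚ[X]) : LaurentSeries ℚ := Polynomial.aeval xL p

/-- `u ∈ ℚ((x⁻¹))` is well approximable if for every integer `C` there are polynomials
`p, q`, `q ≠ 0`, with `‖u - p/q‖ < -2‖q‖ - C`. -/
def wellApprox (u : LaurentSeries ℚ) : Prop :=
  ∀ C : ℤ, ∃ p q : ℚ[X], q ≠ 0 ∧
    ldeg (u - polyToLS p / polyToLS q) < -2 * (q.natDegree : ℤ) - C

/-- `g_d(x) = x^{-d+1} f_d(x)`. -/
def gd (d : ℕ) : LaurentSeries ℚ := HahnSeries.single ((d : ℤ) - 1) 1 * fd d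

/-- `h_d(x) = x^{-1} f_d(x)`. -/
def hd (d : ℕ) : LaurentSeries ℚ := HahnSeries.single (1 : ℤ) 1 * fd d

/-- `u_d(x) = (1 - x^{-1}) f_d(x)`. -/
def ud (d : ℕ) : LaurentSeries ℚ := (1 - HahnSeries.single (1 : ℤ) 1) * fd d

/-- The polynomial `1 + x + ⋯ + x^{d-1}`. -/
def sumPow (d : ℕ) : ℚ[X] := ∑ i ∈ Finset.range d, X ^ i

/-- The real number `f_d(a) = ∏_{t=0}^∞ (1 - a^{-d^t})`. -/
def fdReal (a d : ℕ) : ℝ := ∏' t : ℕ, (1 - (a : ℝ) ^ (-(d ^ t : ℤ)))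

/-- A real number `ξ` is badly approximable if there is `c > 0` with
`|ξ - P/Q| ≥ c/Q²` for all integers `P, Q` with `Q ≥ 1`. -/
def badApproxReal (ξ : ℝ) : Prop :=
  ∃ c : ℝ, 0 < c ∧ ∀ P Q : ℤ, 1 ≤ Q → c / (Q : ℝ) ^ 2 ≤ |ξ - (P : ℝ) / Q|

/-!
If `p/q` approximates `f` with error of degree `< -2‖q‖ - C'`, then `(a p)/(b q)` approximates
`(a/b) f` with error `(a/b)(f - p/q)`, whose degree is shifted by the constant `‖a/b‖`, while the
denominator degree grows by the constant `deg b`; enlarging `C'` absorbs both. The converse is the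
same statement for `b/a`.
-/

lemma xL_pow (n : ℕ) : xL ^ n = HahnSeries.single (-(n : ℤ)) 1 := by
  simp [xL, HahnSeries.single_pow]

lemma algebraMap_rat_laurentSeries (c : ℚ) :
    algebraMap ℚ (LaurentSeries ℚ) c = HahnSeries.single 0 c := by
  rw [eq_ratCast, ← HahnSeries.C_apply, ← map_ratCast HahnSeries.C, Rat.cast_id]

lemma polyToLS_coeff_neg (p : ℚ[X]) (n : ℕ) : (polyToLS p).coeff (-(n : ℤ)) = p.coeff n := by
  simp only [polyToLS, aeval_def, eval₂_eq_sum_range, HahnSeries.coeff_sum, xL_pow,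
    algebraMap_rat_laurentSeries, HahnSeries.single_mul_single, zero_add, mul_one,
    HahnSeries.coeff_single, neg_inj, Nat.cast_inj, Finset.sum_ite_eq, Finset.mem_range]
  split_ifs with h
  · rfl
  · exact (coeff_eq_zero_of_natDegree_lt (by omega)).symm

lemma polyToLS_ne_zero {p : ℚ[X]} (hp : p ≠ 0) : polyToLS p ≠ 0 := fun h =>
  leadingCoeff_ne_zero.mpr hp <| by
    rw [leadingCoeff, ← polyToLS_coeff_neg, h, HahnSeries.coeff_zero]

lemma polyToLS_mul (p q : ℚ[X]) : polyToLS (p * q) = polyToLS p * polyToLS q :=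
  map_mul _ p q

lemma ldeg_zero : ldeg 0 = 0 := by
  simp [ldeg]

lemma ldeg_mul {u v : LaurentSeries ℚ} (hu : u ≠ 0) (hv : v ≠ 0) :
    ldeg (u * v) = ldeg u + ldeg v := by
  rw [ldeg, ldeg, ldeg, HahnSeries.order_mul hu hv, neg_add]

lemma wellApprox.polyToLS_div_mul {f : LaurentSeries ℚ} (hf : wellApprox f) {a b : ℚ[X]}
    (ha : a ≠ 0) (hb : b ≠ 0) : wellApprox (polyToLS a / polyToLS b * f) := by
  intro C
  set c := polyToLS a / polyToLS b
  have hc : c ≠ 0 := div_ne_zero (polyToLS_ne_zero ha) (polyToLS_ne_zero hb)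
  obtain ⟨p, q, hq, hpq⟩ := hf (max 0 (C + ldeg c + 2 * b.natDegree))
  -- with a nonnegative constant the bound fails for the junk value `ldeg 0 = 0`
  have hw : f - polyToLS p / polyToLS q ≠ 0 := by
    intro h
    rw [h, ldeg_zero] at hpq
    omega
  refine ⟨a * p, b * q, mul_ne_zero hb hq, ?_⟩
  have herror : c * f - polyToLS (a * p) / polyToLS (b * q) =
      c * (f - polyToLS p / polyToLS q) := by
    rw [polyToLS_mul, polyToLS_mul, mul_sub, div_mul_div_comm]
  rw [herror, ldeg_mul hc hw, natDegree_mul hb hq]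
  push_cast
  omega

/-- Proposition 1: multiplying by a nonzero rational function preserves
well (hence badly) approximability. -/
theorem wellApprox_mul_rat (f : LaurentSeries ℚ) (a b : ℚ[X]) (ha : a ≠ 0) (hb : b ≠ 0) :
    (wellApprox f ↔ wellApprox (polyToLS a / polyToLS b * f)) ∧
    (¬ wellApprox f ↔ ¬ wellApprox (polyToLS a / polyToLS b * f)) := by
  have hcancel : polyToLS b / polyToLS a * (polyToLS a / polyToLS b * f) = f := by
    field_simp [polyToLS_ne_zero ha, polyToLS_ne_zero hb]
  have hiff : wellApprox f ↔ wellApprox (polyToLS a / polyToLS b * f) :=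
    ⟨fun hf => hf.polyToLS_div_mul ha hb,
      fun hg => hcancel ▸ hg.polyToLS_div_mul hb ha⟩
  exact ⟨hiff, not_congr hiff⟩
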